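/- Let w = w_0w_1⋯w_n be a generalized snake word of length n, and for 1 ≤ i ≤ n let f_i(w) be the generalized snake word of length n obtained from w by replacing w_j with the opposite letter (L ↔ R) for every j ≥ i. If i = 1, or if 2 ≤ i ≤ n and w_{i−1} = w_i, then e(P(f_i(w))) ≤ e(P(w)); moreover, under this hypothesis equality holds if and only if i = 1. In particular e(P(f_1(w))) = e(P(w)), and e(P(f_i(w))) < e(P(w)) whenever 2 ≤ i ≤ n and w_{i−1} = w_i. -/

import Mathlib

/-- The two-letter alphabet `{L, R}` for generalized snake words. -/
inductive Letter : Type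
  | L
  | R
  deriving DecidableEq

/-- The element of the generalized snake poset covered by `2m+2` (besides the relations
coming from `2m+3`): it is `2m-1` when the word turns at the `m`-th letter
(i.e. `m = 1` and `w 1 = L`, or `m ≥ 2` and `w (m-1) ≠ w m`), and `2m` otherwise. -/
def snakeSide (w : ℕ → Letter) (m : ℕ) : ℕ :=
  if (m = 1 ∧ w 1 = Letter.L) ∨ (2 ≤ m ∧ w (m - 1) ≠ w m) then 2 * m - 1 else 2 * m

/-- The covering relation of the generalized snake poset `P(w)` for the word
`ε w₁ ⋯ w_n` (the letter `w i` for `1 ≤ i ≤ n` is the `i`-th letter).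
`SnakeCov n w a b` means `a ≺ b`, i.e. `a` is covered by `b`. -/
inductive SnakeCov (n : ℕ) (w : ℕ → Letter) : ℕ → ℕ → Prop
  | cov10 : SnakeCov n w 1 0
  | cov20 : SnakeCov n w 2 0
  | cov31 : SnakeCov n w 3 1
  | cov32 : SnakeCov n w 3 2
  | covOdd (m : ℕ) (h1 : 1 ≤ m) (h2 : m ≤ n) : SnakeCov n w (2 * m + 3) (2 * m + 1)
  | covBot (m : ℕ) (h1 : 1 ≤ m) (h2 : m ≤ n) : SnakeCov n w (2 * m + 3) (2 * m + 2)
  | covSide (m : ℕ) (h1 : 1 ≤ m) (h2 : m ≤ n) : SnakeCov n w (2 * m + 2) (snakeSide w m)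

/-- The order relation of the generalized snake poset `P(w)` on `{0, …, 2n+3}`:
the reflexive-transitive closure of the covering relation. -/
def SnakeLE (n : ℕ) (w : ℕ → Letter) : ℕ → ℕ → Prop :=
  Relation.ReflTransGen (SnakeCov n w)

theorem snakeCov_lt {n : ℕ} {w : ℕ → Letter} {a b : ℕ} (h : SnakeCov n w a b) : b < a := by
  cases h
  case covSide m h1 h2 => unfold snakeSide; split <;> omega
  all_goals omega

theorem snakeLE_le {n : ℕ} {w : ℕ → Letter} {a b : ℕ} (h : SnakeLE n w a b) : b ≤ a := by
  induction h with
  | refl => exact le_refl a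
  | tail _ hc ih => exact le_trans (le_of_lt (snakeCov_lt hc)) ih

/-- The generalized snake poset `P(ε w₁ ⋯ w_n)` as a type: its elements are `0, 1, …, 2n+3`. -/
def SnakePoset (n : ℕ) (w : ℕ → Letter) : Type := Fin (2 * n + 4)

instance (n : ℕ) (w : ℕ → Letter) : PartialOrder (SnakePoset n w) where
  le a b := SnakeLE n w a.1 b.1
  le_refl _ := Relation.ReflTransGen.refl
  le_trans _ _ _ h1 h2 := Relation.ReflTransGen.trans h1 h2
  le_antisymm a b h1 h2 := Fin.ext (Nat.le_antisymm (snakeLE_le h2) (snakeLE_le h1))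

/-- The number of linear extensions of `P(ε w₁ ⋯ w_n)`: order-preserving bijections
onto the chain `Fin (2n+4)`.  By Stanley's theorem this is the normalized volume of
the order polytope `O(P(w))`. -/
noncomputable def linExtCount (n : ℕ) (w : ℕ → Letter) : ℕ :=
  Nat.card {f : SnakePoset n w ≃ Fin (2 * n + 4) //
    ∀ a b : SnakePoset n w, a ≤ b → f a ≤ f b}

/-- The collection of filters (upper order ideals) of `P(ε w₁ ⋯ w_n)`,
as subsets of `{0, …, 2n+3} ⊆ ℕ`. -/
def SnakeFilters (n : ℕ) (w : ℕ → Letter) : Set (Set ℕ) :=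
  {A | (∀ a ∈ A, a < 2 * n + 4) ∧ ∀ a ∈ A, ∀ b, SnakeLE n w a b → b ∈ A}

/-- The filter of `P(ε w₁ ⋯ w_n)` generated by a set `S`: its upward closure. -/
def snakeUp (n : ℕ) (w : ℕ → Letter) (S : Set ℕ) : Set ℕ :=
  {b | ∃ a ∈ S, SnakeLE n w a b}

/-- The alternating word `L R L R ⋯` (letter `i` is `L` for odd `i`),
defining the snake poset `S_n = P(ε L R L R ⋯)`. -/
def altWord : ℕ → Letter := fun i => if i % 2 = 1 then Letter.L else Letter.R

/-- Flipping a letter `L ↔ R`. -/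
def Letter.flip : Letter → Letter
  | Letter.L => Letter.R
  | Letter.R => Letter.L

/-- The swap operation `f_i`: flip all letters with index `≥ i`. -/
def swapFrom (w : ℕ → Letter) (i : ℕ) : ℕ → Letter :=
  fun j => if i ≤ j then (w j).flip else w j

/-- Membership in `𝒱`: the letter sequence `w₁ ⋯ w_n` contains neither `LRL` nor
`RLR` as a consecutive substring. -/
def InV (n : ℕ) (w : ℕ → Letter) : Prop :=
  ∀ i, 1 ≤ i → i + 2 ≤ n → w i = w (i + 1) ∨ w (i + 1) = w (i + 2)

/-- The order on `{0, …, 2n+5}` making `P̂(w)`: the poset `P(w)` (elements `0, …, 2n+3`)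
with a new maximum `2n+4` and a new minimum `2n+5` adjoined. -/
def SnakeHatLE (n : ℕ) (w : ℕ → Letter) (a b : ℕ) : Prop :=
  a = 2 * n + 5 ∨ b = 2 * n + 4 ∨ (a < 2 * n + 4 ∧ b < 2 * n + 4 ∧ SnakeLE n w a b)

/-- The lattice `P̂(w)`: `P(w)` with a new minimum `0̂ = 2n+5` and maximum `1̂ = 2n+4`. -/
def SnakeHat (n : ℕ) (w : ℕ → Letter) : Type := Fin (2 * n + 6)

instance (n : ℕ) (w : ℕ → Letter) : PartialOrder (SnakeHat n w) where
  le a b := SnakeHatLE n w a.1 b.1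
  le_refl a := by
    by_cases h5 : a.1 = 2 * n + 5
    · exact Or.inl h5
    · by_cases h4 : a.1 = 2 * n + 4
      · exact Or.inr (Or.inl h4)
      · have := a.2
        exact Or.inr (Or.inr ⟨by omega, by omega, Relation.ReflTransGen.refl⟩)
  le_trans a b c hab hbc := by
    rcases hab with h | h | ⟨ha, hb, hab⟩
    · exact Or.inl h
    · rcases hbc with h' | h' | ⟨hb', hc, hbc⟩
      · exact absurd h' (by omega)
      · exact Or.inr (Or.inl h')
      · exact absurd h (by omega)
    · rcases hbc with h' | h' | ⟨hb', hc, hbc⟩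
      · exact absurd h' (by omega)
      · exact Or.inr (Or.inl h')
      · exact Or.inr (Or.inr ⟨ha, hc, Relation.ReflTransGen.trans hab hbc⟩)
  le_antisymm a b h1 h2 := by
    apply Fin.ext
    rcases h1 with h | h | ⟨ha, hb, hab⟩ <;>
      rcases h2 with h' | h' | ⟨ha', hb', hba⟩ <;>
        first
          | omega
          | exact Nat.le_antisymm (snakeLE_le hba) (snakeLE_le hab)

/-- An element `x` of a (finite) lattice is meet-irreducible if it is not the maximum
element and whenever `x` is the meet (greatest lower bound) of `y` and `z`,
one has `x = y` or `x = z`. -/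
def MeetIrred {α : Type*} [PartialOrder α] (x : α) : Prop :=
  ¬IsTop x ∧ ∀ y z : α, IsGLB {y, z} x → x = y ∨ x = z

/-- The poset `Q_w` of meet-irreducible elements of `P̂(w)`, as an induced subposet. -/
abbrev SnakeQ (n : ℕ) (w : ℕ → Letter) : Type :=
  {x : SnakeHat n w // MeetIrred x}

/-- The vertex set of the order polytope `O(α)` of a finite poset `α`: the 0/1 indicator
vectors of the filters of `α`. -/
def OPVertexSet (α : Type*) [PartialOrder α] : Set (α → ℝ) :=
  {v | ∃ A : Set α, (∀ a ∈ A, ∀ b, a ≤ b → b ∈ A) ∧ v = A.indicator fun _ => (1 : ℝ)}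

/-- A circuit of a point configuration: an affinely dependent set all of whose proper
subsets are affinely independent. -/
def IsAffCircuit {α : Type*} (Z : Set (α → ℝ)) : Prop :=
  ¬AffineIndependent ℝ (Subtype.val : Z → (α → ℝ)) ∧
    ∀ Y : Set (α → ℝ), Y ⊂ Z → AffineIndependent ℝ (Subtype.val : Y → (α → ℝ))

/-- The adjacency relation of the graph `G(w)` on vertices `{0, 1, …, n}`:
consecutive indices are adjacent, and `i` and `i+2` are adjacent when
`w (i+1) ≠ w (i+2)` (a turn of the word). -/
def snakeAdj (n : ℕ) (w : ℕ → Letter) (i j : ℕ) : Prop :=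
  (j = i + 1 ∧ j ≤ n) ∨ (i = j + 1 ∧ i ≤ n) ∨
    (j = i + 2 ∧ j ≤ n ∧ w (i + 1) ≠ w (i + 2)) ∨
    (i = j + 2 ∧ i ≤ n ∧ w (j + 1) ≠ w (j + 2))

/-- `𝒢(w)`: the collection of nonempty subsets of `{0, …, n}` inducing connected
subgraphs of `G(w)`. -/
def GSets (n : ℕ) (w : ℕ → Letter) : Set (Set ℕ) :=
  {S | S.Nonempty ∧ (∀ i ∈ S, i ≤ n) ∧
    ∀ a ∈ S, ∀ b ∈ S,
      Relation.ReflTransGen (fun x y => x ∈ S ∧ y ∈ S ∧ snakeAdj n w x y) a b}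

/-! For `i = 1` the transposition `1 ↔ 2` is an isomorphism `P(w) ≅ P(f₁ w)`.

For `i ≥ 2` with `w_{i-1} = w_i` the two posets differ only in the upper cover of `x = 2i+2`:
it is `a = 2i` in `P(w)` and `b = 2i-1` in `P(f_i w)`, where `b` has the same lower covers as `a`
and every upper cover of `a`. A linear extension of `P(f_i w)` either already puts `x` below `a`,
or becomes one of `P(w)` once the labels of `a` and `b` are exchanged; the two cases are told apart
by the relative position of `x` and `b`, so this is an injection. It misses every extension of
`P(w)` that puts `b` below `x` and the other upper cover `c` of `b` below `a`, and such an
extension exists. -/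

section LinExt

variable {α α' β : Type*}

abbrev LinExt (r : α → α → Prop) (β : Type*) [LE β] : Type _ :=
  {f : α ≃ β // ∀ a b, r a b → f a ≤ f b}

theorem LinExt.card_congr [LE β] {r : α → α → Prop} {r' : α' → α' → Prop} (e : α ≃ α')
    (he : ∀ a b, r a b ↔ r' (e a) (e b)) :
    Nat.card (LinExt r β) = Nat.card (LinExt r' β) :=
  Nat.card_congr <| (e.equivCongr (Equiv.refl β)).subtypeEquiv fun f => by
    simp only [Equiv.equivCongr_apply_apply, Equiv.refl_apply, e.forall_congr_left, he,
      Equiv.apply_symm_apply]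

/-- `r'` arises from `r` by moving the only upper cover of `x` from `a` to `b`. -/
structure IsCoverShift (r r' : α → α → Prop) (x a b : α) : Prop where
  irrefl : ∀ u, ¬ r' u u
  rel_iff_of_ne : ∀ u v, u ≠ x → (r u v ↔ r' u v)
  rel_iff_left : ∀ v, r x v ↔ v = a
  rel_iff_right : ∀ v, r' x v ↔ v = b
  lower : ∀ u, u ≠ x → (r' u a ↔ r' u b)
  upper : ∀ v, r' a v → r' b v

namespace IsCoverShift

variable {r r' : α → α → Prop} {x a b : α}

theorem ne_right (H : IsCoverShift r r' x a b) : x ≠ b :=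
  fun h => H.irrefl b (h ▸ (H.rel_iff_right b).2 rfl)

theorem not_rel_right_left (H : IsCoverShift r r' x a b) : ¬ r' b a :=
  fun h => H.irrefl b ((H.lower b H.ne_right.symm).1 h)

theorem not_rel_left_right (H : IsCoverShift r r' x a b) : ¬ r' a b :=
  fun h => H.irrefl b (H.upper b h)

theorem le_right [Preorder β] (H : IsCoverShift r r' x a b) {f : α ≃ β}
    (hf : ∀ u v, r' u v → f u ≤ f v) : f x ≤ f b :=
  hf x b ((H.rel_iff_right b).2 rfl)

theorem mem_of_le [Preorder β] (H : IsCoverShift r r' x a b) {f : α ≃ β}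
    (hf : ∀ u v, r' u v → f u ≤ f v) (hxa : f x ≤ f a) : ∀ u v, r u v → f u ≤ f v := by
  intro u v huv
  by_cases hu : u = x
  · subst hu
    rw [(H.rel_iff_left v).1 huv]
    exact hxa
  · exact hf u v ((H.rel_iff_of_ne u v hu).1 huv)

theorem swap_trans_mem [DecidableEq α] [LinearOrder β] (H : IsCoverShift r r' x a b)
    {f : α ≃ β} (hf : ∀ u v, r' u v → f u ≤ f v) (hax : f a < f x) :
    ∀ u v, r u v → ((Equiv.swap a b).trans f) u ≤ ((Equiv.swap a b).trans f) v := by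
  have hxa : x ≠ a := fun h => (h ▸ hax).false
  have hxb := H.ne_right
  intro u v huv
  simp only [Equiv.trans_apply]
  by_cases hu : u = x
  · subst hu
    rw [(H.rel_iff_left v).1 huv, Equiv.swap_apply_left, Equiv.swap_apply_of_ne_of_ne hxa hxb]
    exact H.le_right hf
  have huv := (H.rel_iff_of_ne u v hu).1 huv
  have hne : u ≠ v := fun h => H.irrefl u (h ▸ huv)
  rcases eq_or_ne u a with rfl | hua
  · have hvb : v ≠ b := fun h => H.not_rel_left_right (h ▸ huv)
    rw [Equiv.swap_apply_left, Equiv.swap_apply_of_ne_of_ne hne.symm hvb]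
    exact hf _ _ (H.upper v huv)
  rcases eq_or_ne u b with rfl | hub
  · have hva : v ≠ a := fun h => H.not_rel_right_left (h ▸ huv)
    rw [Equiv.swap_apply_right, Equiv.swap_apply_of_ne_of_ne hva hne.symm]
    exact hax.le.trans ((H.le_right hf).trans (hf _ _ huv))
  rw [Equiv.swap_apply_of_ne_of_ne hua hub]
  rcases eq_or_ne v a with rfl | hva
  · rw [Equiv.swap_apply_left]
    exact hf _ _ ((H.lower u hu).1 huv)
  rcases eq_or_ne v b with rfl | hvb
  · rw [Equiv.swap_apply_right]
    exact hf _ _ ((H.lower u hu).2 huv)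
  rw [Equiv.swap_apply_of_ne_of_ne hva hvb]
  exact hf _ _ huv

theorem card_linExt_lt [DecidableEq α] [Finite α] [LinearOrder β] (H : IsCoverShift r r' x a b)
    {c : α} (hbc : r' b c) (h : LinExt r β) (hbx : h.1 b < h.1 x) (hca : h.1 c < h.1 a) :
    Nat.card (LinExt r' β) < Nat.card (LinExt r β) := by
  classical
  let Φ : LinExt r' β → LinExt r β := fun f =>
    if hxa : f.1 x ≤ f.1 a then ⟨f.1, H.mem_of_le f.2 hxa⟩
    else ⟨(Equiv.swap a b).trans f.1, H.swap_trans_mem f.2 (not_le.1 hxa)⟩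
  -- the branch taken by `Φ f` can be read off from `Φ f`
  have hΦ : ∀ f, (Φ f).1 x ≤ (Φ f).1 b ↔ f.1 x ≤ f.1 a := by
    intro f
    by_cases hfx : f.1 x ≤ f.1 a
    · simp only [Φ, dif_pos hfx, hfx, iff_true]
      exact H.le_right f.2
    · have hxa : x ≠ a := fun h => hfx (h ▸ le_rfl)
      simp only [Φ, dif_neg hfx, hfx, Equiv.trans_apply, Equiv.swap_apply_right,
        Equiv.swap_apply_of_ne_of_ne hxa H.ne_right]
  have hinj : Function.Injective Φ := by
    intro f g hfg
    have hcase := (hΦ f).symm.trans (hfg ▸ hΦ g)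
    by_cases hfx : f.1 x ≤ f.1 a
    · simpa [Φ, hfx, hcase.1 hfx, Subtype.ext_iff] using hfg
    · have hgx : ¬ g.1 x ≤ g.1 a := fun h => hfx (hcase.2 h)
      simp only [Φ, dif_neg hfx, dif_neg hgx, Subtype.mk.injEq] at hfg
      exact Subtype.ext <| Equiv.ext fun u => by
        simpa using DFunLike.congr_fun hfg (Equiv.swap a b u)
  have hh : h ∉ Set.range Φ := by
    rintro ⟨f, rfl⟩
    have hfx : ¬ f.1 x ≤ f.1 a := fun hfx => hbx.not_ge ((hΦ f).2 hfx)
    have hcb : c ≠ b := fun h => H.irrefl b (h ▸ hbc)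
    have hca' : c ≠ a := fun h => H.not_rel_right_left (h ▸ hbc)
    simp only [Φ, dif_neg hfx, Equiv.trans_apply, Equiv.swap_apply_left,
      Equiv.swap_apply_of_ne_of_ne hca' hcb] at hca
    exact hca.not_ge (f.2 b c hbc)
  have := Fintype.ofFinite (LinExt r β)
  have := Fintype.ofFinite (LinExt r' β)
  rw [Nat.card_eq_fintype_card, Nat.card_eq_fintype_card]
  exact Fintype.card_lt_of_injective_of_notMem Φ hinj hh

end IsCoverShift

end LinExt

theorem Letter.flip_flip (x : Letter) : x.flip.flip = x := by cases x <;> rfl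

theorem Letter.flip_injective : Function.Injective Letter.flip := fun x y h => by
  simpa only [Letter.flip_flip] using congrArg Letter.flip h

theorem Letter.flip_ne_self (x : Letter) : x.flip ≠ x := by cases x <;> decide

theorem swapFrom_swapFrom (w : ℕ → Letter) (i : ℕ) : swapFrom (swapFrom w i) i = w := by
  funext j
  by_cases hj : i ≤ j <;> simp [swapFrom, hj, Letter.flip_flip]

theorem snakeSide_mem (w : ℕ → Letter) (m : ℕ) :
    snakeSide w m = 2 * m - 1 ∨ snakeSide w m = 2 * m := by
  unfold snakeSide
  split_ifs
  exacts [Or.inl rfl, Or.inr rfl]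

theorem snakeSide_of_eq {w : ℕ → Letter} {m : ℕ} (hm : 2 ≤ m) (h : w (m - 1) = w m) :
    snakeSide w m = 2 * m := by
  rw [snakeSide, if_neg]
  rintro (⟨h1, -⟩ | ⟨-, hne⟩)
  exacts [by omega, hne h]

theorem snakeSide_of_ne {w : ℕ → Letter} {m : ℕ} (hm : 2 ≤ m) (h : w (m - 1) ≠ w m) :
    snakeSide w m = 2 * m - 1 :=
  if_pos (Or.inr ⟨hm, h⟩)

theorem snakeSide_swapFrom_of_ne (w : ℕ → Letter) {i m : ℕ} (hi : 1 ≤ i) (hm : m ≠ i) :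
    snakeSide (swapFrom w i) m = snakeSide w m := by
  rcases Nat.lt_or_gt_of_ne hm with hmi | hmi
  · have hsw : ∀ j ≤ m, swapFrom w i j = w j := fun j hj => if_neg (by omega)
    rcases Nat.eq_zero_or_pos m with rfl | hm0
    · simp [snakeSide]
    · simp only [snakeSide, hsw 1 hm0, hsw (m - 1) (Nat.sub_le m 1), hsw m le_rfl]
  · have hsw : ∀ j ≥ m - 1, swapFrom w i j = (w j).flip := fun j hj => if_pos (by omega)
    have hm1 : m ≠ 1 := by omega
    simp only [snakeSide, hsw (m - 1) le_rfl, hsw m (Nat.sub_le m 1),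
      Letter.flip_injective.ne_iff, hm1, false_and, false_or]

section SnakeCov

variable {n : ℕ} {w : ℕ → Letter}

theorem snakeCov_swapFrom_of_ne {i u v : ℕ} (hi : 1 ≤ i) (hu : u ≠ 2 * i + 2)
    (h : SnakeCov n w u v) : SnakeCov n (swapFrom w i) u v := by
  cases h with
  | cov10 => exact .cov10
  | cov20 => exact .cov20
  | cov31 => exact .cov31
  | cov32 => exact .cov32
  | covOdd m h1 h2 => exact .covOdd m h1 h2
  | covBot m h1 h2 => exact .covBot m h1 h2
  | covSide m h1 h2 =>
    rw [← snakeSide_swapFrom_of_ne w hi (by omega)]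
    exact .covSide m h1 h2

theorem snakeCov_swapFrom_iff {i u v : ℕ} (hi : 1 ≤ i) (hu : u ≠ 2 * i + 2) :
    SnakeCov n (swapFrom w i) u v ↔ SnakeCov n w u v := by
  refine ⟨fun h => ?_, snakeCov_swapFrom_of_ne hi hu⟩
  simpa only [swapFrom_swapFrom] using snakeCov_swapFrom_of_ne hi hu h

theorem snakeCov_even_iff {m v : ℕ} (hm1 : 1 ≤ m) (hmn : m ≤ n) :
    SnakeCov n w (2 * m + 2) v ↔ v = snakeSide w m := by
  refine ⟨fun h => ?_, fun h => h ▸ .covSide m hm1 hmn⟩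
  generalize hu : 2 * m + 2 = u at h
  cases h with
  | covSide k _ _ =>
    obtain rfl : k = m := by omega
    rfl
  | _ => omega

theorem snakeCov_odd_sub_two {m : ℕ} (hm : m ≤ n) : SnakeCov n w (2 * m + 3) (2 * m + 1) := by
  cases m with
  | zero => exact .cov31
  | succ k => exact .covOdd (k + 1) (by omega) hm

theorem snakeCov_odd_sub_one {m : ℕ} (hm : m ≤ n) : SnakeCov n w (2 * m + 3) (2 * m + 2) := by
  cases m with
  | zero => exact .cov32
  | succ k => exact .covBot (k + 1) (by omega) hm

theorem snakeCov_lower_iff {m u v : ℕ} (hm : m ≤ n) (hu : u ≠ 2 * m + 4)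
    (hv : v = 2 * m + 1 ∨ v = 2 * m + 2) : SnakeCov n w u v ↔ u = 2 * m + 3 := by
  constructor
  · intro h
    cases h with
    | covSide k _ _ =>
      have := snakeSide_mem w k
      omega
    | _ => omega
  · rintro rfl
    rcases hv with rfl | rfl
    exacts [snakeCov_odd_sub_two hm, snakeCov_odd_sub_one hm]

theorem snakeCov_odd_of_even {m v : ℕ} (hmn : m + 1 ≤ n) (h : SnakeCov n w (2 * m + 4) v) :
    SnakeCov n w (2 * m + 3) v := by
  rw [show 2 * m + 4 = 2 * (m + 1) + 2 by ring, snakeCov_even_iff (by omega) hmn] at h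
  rcases snakeSide_mem w (m + 1) with hs | hs <;> rw [h, hs]
  exacts [snakeCov_odd_sub_two (by omega), snakeCov_odd_sub_one (by omega)]

theorem snakeSide_swapFrom_one (w : ℕ → Letter) :
    snakeSide (swapFrom w 1) 1 = Equiv.swap 1 2 (snakeSide w 1) := by
  cases hw : w 1 <;> simp [snakeSide, swapFrom, hw, Letter.flip]

theorem snakeCov_swapFrom_one {u v : ℕ} (h : SnakeCov n w u v) :
    SnakeCov n (swapFrom w 1) (Equiv.swap 1 2 u) (Equiv.swap 1 2 v) := by
  have fix : ∀ z, 3 ≤ z → Equiv.swap 1 2 z = z := fun z hz =>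
    Equiv.swap_apply_of_ne_of_ne (by omega) (by omega)
  cases h with
  | cov10 => exact .cov20
  | cov20 => exact .cov10
  | cov31 => exact .cov32
  | cov32 => exact .cov31
  | covOdd m h1 h2 =>
    rw [fix _ (by omega), fix _ (by omega)]
    exact .covOdd m h1 h2
  | covBot m h1 h2 =>
    rw [fix _ (by omega), fix _ (by omega)]
    exact .covBot m h1 h2
  | covSide m h1 h2 =>
    rw [fix _ (by omega)]
    rcases eq_or_ne m 1 with rfl | hm
    · rw [← snakeSide_swapFrom_one]
      exact .covSide 1 h1 h2
    · rw [fix _ (by have := snakeSide_mem w m; omega), ← snakeSide_swapFrom_of_ne w le_rfl hm]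
      exact .covSide m h1 h2

theorem snakeCov_swapFrom_one_iff {u v : ℕ} :
    SnakeCov n (swapFrom w 1) (Equiv.swap 1 2 u) (Equiv.swap 1 2 v) ↔ SnakeCov n w u v := by
  refine ⟨fun h => ?_, snakeCov_swapFrom_one⟩
  simpa only [swapFrom_swapFrom, Equiv.swap_apply_self] using snakeCov_swapFrom_one h

end SnakeCov

abbrev snakeCovFin (n : ℕ) (w : ℕ → Letter) (a b : Fin (2 * n + 4)) : Prop := SnakeCov n w a b

theorem linExtCount_eq_card (n : ℕ) (w : ℕ → Letter) :
    linExtCount n w = Nat.card (LinExt (snakeCovFin n w) (Fin (2 * n + 4))) := by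
  refine Nat.card_congr (Equiv.subtypeEquivRight fun f => ⟨fun hf a b h => hf a b (.single h), ?_⟩)
  intro hf a b hab
  obtain ⟨a, ha⟩ := a
  obtain ⟨b, hb⟩ := b
  change SnakeLE n w a b at hab
  induction hab with
  | refl => exact le_rfl
  | tail hac hcb ih =>
    have hc := (snakeLE_le hac).trans_lt ha
    exact (ih hc).trans (hf ⟨_, hc⟩ ⟨_, hb⟩ hcb)

theorem linExtCount_swapFrom_one (n : ℕ) (w : ℕ → Letter) :
    linExtCount n (swapFrom w 1) = linExtCount n w := by
  rw [linExtCount_eq_card, linExtCount_eq_card]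
  refine (LinExt.card_congr (Equiv.swap (⟨1, by omega⟩ : Fin (2 * n + 4)) ⟨2, by omega⟩)
    fun a b => ?_).symm
  simp only [snakeCovFin, ← Fin.val_injective.swap_apply]
  exact snakeCov_swapFrom_one_iff.symm

-- With `i = k + 2`: `x = 2i + 2`, `a = 2i` and `b = 2i - 1`.
theorem isCoverShift_snakeCovFin {n k : ℕ} {w : ℕ → Letter} (hkn : k + 2 ≤ n)
    (hw : w (k + 1) = w (k + 2)) :
    IsCoverShift (snakeCovFin n w) (snakeCovFin n (swapFrom w (k + 2)))
      ⟨2 * k + 6, by omega⟩ ⟨2 * k + 4, by omega⟩ ⟨2 * k + 3, by omega⟩ where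
  irrefl u h := (snakeCov_lt h).false
  rel_iff_of_ne u v hu :=
    (snakeCov_swapFrom_iff (by omega) (by rw [Ne, Fin.ext_iff] at hu; omega)).symm
  rel_iff_left v := by
    rw [Fin.ext_iff]
    show SnakeCov n w (2 * (k + 2) + 2) v ↔ v.1 = 2 * (k + 2)
    rw [snakeCov_even_iff (by omega) hkn, snakeSide_of_eq (by omega) hw]
  rel_iff_right v := by
    have hne : swapFrom w (k + 2) (k + 2 - 1) ≠ swapFrom w (k + 2) (k + 2) := by
      show swapFrom w (k + 2) (k + 1) ≠ _
      simp only [swapFrom, if_neg (show ¬ k + 2 ≤ k + 1 by omega), le_rfl, if_true, hw]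
      exact (Letter.flip_ne_self _).symm
    rw [Fin.ext_iff]
    show SnakeCov n _ (2 * (k + 2) + 2) v ↔ v.1 = 2 * (k + 2) - 1
    rw [snakeCov_even_iff (by omega) hkn, snakeSide_of_ne (by omega) hne]
  lower u hu := by
    have hu' : u.1 ≠ 2 * (k + 1) + 4 := by rw [Ne, Fin.ext_iff] at hu; omega
    show SnakeCov n _ u (2 * (k + 1) + 2) ↔ SnakeCov n _ u (2 * (k + 1) + 1)
    rw [snakeCov_lower_iff (by omega) hu' (.inr rfl),
      snakeCov_lower_iff (by omega) hu' (.inl rfl)]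
  upper v := snakeCov_odd_of_even (by omega)

theorem Tuple.exists_perm_lt_of_lt {d : ℕ} {γ : Type*} [LinearOrder γ] (f : Fin d → γ) :
    ∃ σ : Equiv.Perm (Fin d), ∀ u v, f u < f v → σ u < σ v := by
  refine ⟨(Tuple.sort f).symm, fun u v huv => lt_of_not_ge fun hvu => huv.not_ge ?_⟩
  simpa using Tuple.monotone_sort f hvu

/-- With `s = snakeSide w (k + 1)` and `c = 4k + 3 - s` the other element of `{2k+1, 2k+2}`,
this modifies the depth `4z` so that `s, 2k+4, 2k+6, c, 2k+3, 2k+5` come in this order from the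
top: an extension of `P(w)` (with `w (k+1) = w (k+2)`) placing `2k+3` below `2k+6` and `c` below
`2k+4`. -/
def shiftDepth (k s z : ℕ) : ℕ :=
  if z = 2 * k + 4 then 4 * s + 1 else if z = 2 * k + 6 then 4 * s + 2
  else if z = 4 * k + 3 - s then 4 * s + 3 else 4 * z

theorem shiftDepth_lt_of_snakeCov {n k u v : ℕ} {w : ℕ → Letter} (hw : w (k + 1) = w (k + 2))
    (h : SnakeCov n w u v) :
    shiftDepth k (snakeSide w (k + 1)) v < shiftDepth k (snakeSide w (k + 1)) u := by
  have hs := snakeSide_mem w (k + 1)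
  cases h with
  | covSide m h1 h2 =>
    have hside := snakeSide_mem w m
    have hsi : m ≠ k + 2 ∨ snakeSide w m = 2 * (k + 2) := by
      rcases eq_or_ne m (k + 2) with rfl | hm
      exacts [.inr (snakeSide_of_eq (by omega) hw), .inl hm]
    have hsi' : m ≠ k + 1 ∨ snakeSide w m = snakeSide w (k + 1) := by
      rcases eq_or_ne m (k + 1) with rfl | hm
      exacts [.inr rfl, .inl hm]
    unfold shiftDepth
    split_ifs <;> omega
  | _ =>
    unfold shiftDepth
    split_ifs <;> first | contradiction | omega

theorem exists_linExt_shift {n k : ℕ} {w : ℕ → Letter} (hkn : k + 2 ≤ n)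
    (hw : w (k + 1) = w (k + 2)) :
    ∃ (h : LinExt (snakeCovFin n w) (Fin (2 * n + 4))) (c : Fin (2 * n + 4)),
      (c.1 = 2 * k + 1 ∨ c.1 = 2 * k + 2) ∧
      h.1 ⟨2 * k + 3, by omega⟩ < h.1 ⟨2 * k + 6, by omega⟩ ∧
      h.1 c < h.1 ⟨2 * k + 4, by omega⟩ := by
  have hs := snakeSide_mem w (k + 1)
  obtain ⟨σ, hσ⟩ := Tuple.exists_perm_lt_of_lt fun z : Fin (2 * n + 4) =>
    OrderDual.toDual (shiftDepth k (snakeSide w (k + 1)) z)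
  simp only [OrderDual.toDual_lt_toDual] at hσ
  refine ⟨⟨σ, fun a b hab => (hσ a b (shiftDepth_lt_of_snakeCov hw hab)).le⟩,
    ⟨4 * k + 3 - snakeSide w (k + 1), by omega⟩, by dsimp only; omega, hσ _ _ ?_, hσ _ _ ?_⟩ <;>
  · simp only [shiftDepth]
    split_ifs <;> omega

theorem linExtCount_swapFrom_lt {n k : ℕ} {w : ℕ → Letter} (hkn : k + 2 ≤ n)
    (hw : w (k + 1) = w (k + 2)) : linExtCount n (swapFrom w (k + 2)) < linExtCount n w := by
  obtain ⟨h, c, hc, hbx, hca⟩ := exists_linExt_shift hkn hw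
  rw [linExtCount_eq_card, linExtCount_eq_card]
  refine (isCoverShift_snakeCovFin hkn hw).card_linExt_lt ?_ h hbx hca
  show SnakeCov n _ (2 * k + 3) c
  rcases hc with hc | hc <;> rw [hc]
  exacts [snakeCov_odd_sub_two (by omega), snakeCov_odd_sub_one (by omega)]

theorem stmt6 (n i : ℕ) (w : ℕ → Letter) (hi1 : 1 ≤ i) (hi2 : i ≤ n)
    (h : i = 1 ∨ w (i - 1) = w i) :
    linExtCount n (swapFrom w i) ≤ linExtCount n w ∧
      (linExtCount n (swapFrom w i) = linExtCount n w ↔ i = 1) := by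
  rcases eq_or_ne i 1 with rfl | hi
  · exact ⟨(linExtCount_swapFrom_one n w).le, iff_of_true (linExtCount_swapFrom_one n w) rfl⟩
  · obtain ⟨k, rfl⟩ : ∃ k, i = k + 2 := ⟨i - 2, by omega⟩
    have hlt := linExtCount_swapFrom_lt hi2 (h.resolve_left hi)
    exact ⟨hlt.le, iff_of_false hlt.ne hi⟩
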